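/- The original Altes waveform satisfies the homogeneous functional equation for all real orders: for every real n and every ω > 0, ω^n·U_A(ω) = C(n)·U_A(ω/k^n), where C(n) = k^{nν + n²/2}·exp(2πi·n·c). -/

import Mathlib

/-- The original Altes waveform with parameters ν, c and k. -/
noncomputable def altesOrig (ν c k : ℝ) : ℝ → ℂ := fun ω =>
  (↑(k ^ (-(ν ^ 2) / 2)) : ℂ) * (↑(ω ^ ν) : ℂ) *
    Complex.exp (((-(Real.log ω) ^ 2 / (2 * Real.log k) : ℝ)) : ℂ) *
    Complex.exp (2 * Real.pi * Complex.I * c * Real.log ω / Real.log k)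

/-- The proportionality constant of the Altes functional equation. -/
noncomputable def altesC (ν c k : ℝ) : ℝ → ℂ := fun n =>
  (↑(k ^ (n * ν + n ^ 2 / 2)) : ℂ) * Complex.exp (2 * Real.pi * Complex.I * n * c)

/-!
In the logarithmic variable `t = log ω` the Altes waveform is `exp (Q t)` for a complex quadratic
polynomial `Q` with leading coefficient `-1 / (2 log k)`. Shifting `t` by `n log k` changes `Q` by
the linear term `n t` plus a constant, and that constant is `log C(n)`.
-/

open Complex

/-- The exponent `Q`, with `L` standing for `log k`. -/
noncomputable def altesExponent (ν c L t : ℝ) : ℂ :=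
  -(ν ^ 2 / 2 * L) + ν * t - t ^ 2 / (2 * L) + 2 * Real.pi * I * c * t / L

theorem ofReal_rpow_eq_exp {x : ℝ} (hx : 0 < x) (y : ℝ) :
    ((x ^ y : ℝ) : ℂ) = exp (Real.log x * y) := by
  rw [Real.rpow_def_of_pos hx, ofReal_exp, ofReal_mul]

theorem altesOrig_eq_exp_altesExponent (ν c : ℝ) {k ω : ℝ} (hk : 0 < k) (hω : 0 < ω) :
    altesOrig ν c k ω = exp (altesExponent ν c (Real.log k) (Real.log ω)) := by
  simp only [altesOrig, altesExponent, ofReal_rpow_eq_exp hk, ofReal_rpow_eq_exp hω,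
    ← exp_add]
  congr 1
  push_cast
  ring

theorem altesC_eq_exp (ν c : ℝ) {k : ℝ} (hk : 0 < k) (n : ℝ) :
    altesC ν c k n = exp ((n * ν + n ^ 2 / 2) * Real.log k + 2 * Real.pi * I * n * c) := by
  simp only [altesC, ofReal_rpow_eq_exp hk, ← exp_add]
  congr 1
  push_cast
  ring

theorem altesExponent_sub_mul (ν c n t : ℝ) {L : ℝ} (hL : L ≠ 0) :
    n * t + altesExponent ν c L t =
      ((n * ν + n ^ 2 / 2) * L + 2 * Real.pi * I * n * c) + altesExponent ν c L (t - n * L) := by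
  have hL' : (L : ℂ) ≠ 0 := ofReal_ne_zero.mpr hL
  simp only [altesExponent]
  push_cast
  field_simp
  ring

/-- The original Altes waveform satisfies the homogeneous
functional equation for all real orders: ω^n·U_A(ω) = C(n)·U_A(ω/k^n), where
C(n) = k^{nν + n²/2}·exp(2πi·n·c). -/
theorem altesOrig_functional_equation (ν c k : ℝ) (hk : 1 < k) :
    ∀ n : ℝ, ∀ ω : ℝ, 0 < ω →
      (↑(ω ^ n) : ℂ) * altesOrig ν c k ω =
        altesC ν c k n * altesOrig ν c k (ω / k ^ n) := by
  intro n ω hω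
  have hk0 : 0 < k := zero_lt_one.trans hk
  have hkn : 0 < k ^ n := Real.rpow_pos_of_pos hk0 n
  have hlog : Real.log (ω / k ^ n) = Real.log ω - n * Real.log k := by
    rw [Real.log_div hω.ne' hkn.ne', Real.log_rpow hk0]
  rw [altesOrig_eq_exp_altesExponent ν c hk0 hω,
    altesOrig_eq_exp_altesExponent ν c hk0 (div_pos hω hkn), hlog, altesC_eq_exp ν c hk0,
    ofReal_rpow_eq_exp hω, ← exp_add, ← exp_add, mul_comm (Real.log ω : ℂ),
    altesExponent_sub_mul ν c n _ (Real.log_pos hk).ne']
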